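/- Let G be a metabelian 5-group of maximal class of order 5^4 with G/γ_2(G) of type (5,5). Choose x ∈ G ∖ χ_2(G) and y ∈ χ_2(G) ∖ γ_2(G), set s_2 = [y, x], s_j = [s_{j−1}, x] for j ≥ 3, and let H_2 = ⟨x, γ_2(G)⟩. If the transfers V_{χ_2(G) → γ_2(G)} and V_{H_2 → γ_2(G)} are both trivial, then x^5 = 1, y^5 · s_2^{10} · s_3^{10} · s_4^5 · s_5 = 1, and [y, s_2] = 1 (i.e., w = z = 0 and a = 0, the defect k(G) = 0); hence G is isomorphic to G_0^{(4)}(0, 0). -/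

import Mathlib

open Subgroup
open scoped commutatorElement IsMulCommutative

/-- The two-step centralizer `χ₂(G) = {g ∈ G : [g,u] ∈ γ₄(G) for all u ∈ γ₂(G)}`,
where `γ_j(G) = lowerCentralSeries G (j-1)`. -/
def twoStepCentralizer (G : Type*) [Group G] : Subgroup G where
  carrier := {g : G | ∀ u ∈ (⊤ : Subgroup G).lowerCentralSeries 1, ⁅g, u⁆ ∈ (⊤ : Subgroup G).lowerCentralSeries 3}
  one_mem' := by
    intro u hu
    simpa using one_mem ((⊤ : Subgroup G).lowerCentralSeries 3)
  mul_mem' := by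
    intro a b ha hb u hu
    have h : ⁅a * b, u⁆ = (a * ⁅b, u⁆ * a⁻¹) * ⁅a, u⁆ := by
      simp only [commutatorElement_def]; group
    rw [h]
    exact mul_mem ((Subgroup.lowerCentralSeries_normal ⊤ 3).conj_mem _ (hb u hu) a) (ha u hu)
  inv_mem' := by
    intro a ha u hu
    have h : ⁅a⁻¹, u⁆ = a⁻¹ * ⁅a, u⁆⁻¹ * a := by
      simp only [commutatorElement_def]; group
    rw [h]
    simpa using (Subgroup.lowerCentralSeries_normal ⊤ 3).conj_mem _ (inv_mem (ha u hu)) a⁻¹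

/-- The transfer `V_{H → γ₂(G)}` from a subgroup `H` of `G` to the (abelian) commutator
subgroup `γ₂(G) = [G,G] ≤ H` is trivial, i.e. it maps every element of `H` to the identity. -/
noncomputable def TransferToDerivedTrivial {G : Type*} [Group G] (H : Subgroup G)
    [IsMulCommutative (((⊤ : Subgroup G).lowerCentralSeries 1).subgroupOf H)]
    [(((⊤ : Subgroup G).lowerCentralSeries 1).subgroupOf H).FiniteIndex] : Prop :=
  ∀ h : H, MonoidHom.transfer (MonoidHom.id ↥(((⊤ : Subgroup G).lowerCentralSeries 1).subgroupOf H)) h = 1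

/-!
Since `γ₄(G) = 1`, the abelian group `γ₂(G)` is central in `χ₂(G)`. Since `G/γ₂(G) ≅ C₅ × C₅`, the
powers of `x` lying in `γ₂(G)` are powers of `x⁵ ∈ γ₂(G)`, which commutes with `x` and with `γ₂(G)`,
hence is central in `H₂ = ⟨x, γ₂(G)⟩`. For such elements the transfer to `γ₂(G)` is the power map
`g ↦ g ^ [H : γ₂(G)]`, and both indices are `5`. So the trivial transfers give `x⁵ = 1` and `g⁵ = 1`
for all `g ∈ χ₂(G) ⊇ γ₂(G)`, in particular for `y`, `s₂`, `s₃`. Finally `s₄, s₅ ∈ γ₄(G) = 1`,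
`[y, s₂] ∈ [χ₂(G), γ₂(G)] ≤ γ₄(G) = 1`, and the defect is `0` since `γ₃(G) ≠ 1`.
-/

local notation "γ₂" => Subgroup.lowerCentralSeries ⊤ 1
local notation "γ₃" => Subgroup.lowerCentralSeries ⊤ 2
local notation "γ₄" => Subgroup.lowerCentralSeries ⊤ 3

section

variable {G : Type*} [Group G] {p : ℕ}

theorem coe_transfer_id_eq_pow_of_pow_mem_center {K : Subgroup G} [K.Normal]
    [IsMulCommutative K] [K.FiniteIndex] {g : G} (hg : ∀ m : ℕ, g ^ m ∈ K → g ^ m ∈ center G) :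
    (MonoidHom.transfer (MonoidHom.id K) g : G) = g ^ K.index := by
  rw [MonoidHom.transfer_eq_pow (MonoidHom.id K) g fun m g₀ hm => ?_]
  · rfl
  have hmK : g ^ m ∈ K := by simpa [mul_assoc] using ‹K.Normal›.conj_mem _ hm g₀
  rw [mul_assoc, ← mem_center_iff.mp (hg m hmK) g₀, inv_mul_cancel_left]

theorem relIndex_eq_of_index_eq_sq {K H : Subgroup G} (hp : p.Prime)
    (hK : K.index = p ^ 2) (hKH : K ≤ H) (hH : H ≠ ⊤) (hHK : ¬H ≤ K) : K.relIndex H = p := by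
  have hmul : K.relIndex H * H.index = p ^ 2 := by rw [relIndex_mul_index hKH, hK]
  obtain ⟨i, hi, hpow⟩ := (Nat.dvd_prime_pow hp).mp (Dvd.intro _ hmul)
  interval_cases i
  · exact absurd (relIndex_eq_one.mp (by simpa using hpow)) hHK
  · simpa using hpow
  · rw [hpow, Nat.mul_eq_left (pow_ne_zero 2 hp.ne_zero), index_eq_one] at hmul
    exact absurd hmul hH

theorem prime_dvd_of_pow_mem {K : Subgroup G} [K.Normal] (hp : p.Prime) {g : G}
    (hg : g ∉ K) (hgp : g ^ p ∈ K) {m : ℕ} (hgm : g ^ m ∈ K) : p ∣ m := by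
  have := Fact.mk hp
  have horder : orderOf (g : G ⧸ K) = p :=
    orderOf_eq_prime ((QuotientGroup.eq_one_iff _).mpr hgp) (mt (QuotientGroup.eq_one_iff _).mp hg)
  exact horder ▸ orderOf_dvd_of_pow_eq_one ((QuotientGroup.eq_one_iff _).mpr hgm)

theorem closure_singleton_sup_ne_top {K : Subgroup G} [K.Normal] (hp : p.Prime)
    (hK : K.index = p ^ 2) {g : G} (hgp : g ^ p ∈ K) : closure {g} ⊔ K ≠ ⊤ := by
  intro htop
  have hmap : (closure {g} ⊔ K).map (QuotientGroup.mk' K) = zpowers (g : G ⧸ K) := by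
    rw [Subgroup.map_sup, MonoidHom.map_closure, Set.image_singleton,
      (Subgroup.map_eq_bot_iff _).mpr (QuotientGroup.ker_mk' K).ge, sup_bot_eq, zpowers_eq_closure]
    rfl
  have hcard : p ^ 2 = orderOf (g : G ⧸ K) := by
    rw [← hK, index_eq_card, ← Nat.card_zpowers, ← hmap, htop,
      map_top_of_surjective _ (QuotientGroup.mk'_surjective K), card_top]
  have hdvd : p ^ 2 ∣ p := hcard ▸ orderOf_dvd_of_pow_eq_one ((QuotientGroup.eq_one_iff _).mpr hgp)
  exact absurd (Nat.le_of_dvd hp.pos hdvd) (by nlinarith [hp.two_le])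

theorem index_lowerCentralSeries_one_of_mulEquiv [NeZero p]
    (e : Abelianization G ≃* Multiplicative (ZMod p × ZMod p)) :
    (γ₂ : Subgroup G).index = p ^ 2 := by
  rw [top_lowerCentralSeries_one, index_eq_card, ← Abelianization, Nat.card_congr e.toEquiv]
  simp [Nat.card_eq_fintype_card, sq]

theorem pow_mem_lowerCentralSeries_one_of_mulEquiv
    (e : Abelianization G ≃* Multiplicative (ZMod p × ZMod p)) (g : G) : g ^ p ∈ γ₂ := by
  have hexp : ∀ b : Multiplicative (ZMod p × ZMod p), b ^ p = 1 := fun b => by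
    rw [← toAdd_eq_zero, toAdd_pow]
    ext <;> simp
  have hof : Abelianization.of (g ^ p) = 1 := by rw [← e.map_eq_one_iff, map_pow, map_pow, hexp]
  rw [top_lowerCentralSeries_one]
  exact (QuotientGroup.eq_one_iff _).mp hof

theorem commutatorElement_mem_lowerCentralSeries_succ {n : ℕ} {a : G}
    (ha : a ∈ (⊤ : Subgroup G).lowerCentralSeries n) (b : G) :
    ⁅a, b⁆ ∈ (⊤ : Subgroup G).lowerCentralSeries (n + 1) := by
  rw [Subgroup.lowerCentralSeries_succ]
  exact commutator_mem_commutator ha (mem_top b)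

theorem commute_of_mem_twoStepCentralizer (hγ₄ : (γ₄ : Subgroup G) = ⊥) {a u : G}
    (ha : a ∈ twoStepCentralizer G) (hu : u ∈ γ₂) : Commute a u :=
  commutatorElement_eq_one_iff_commute.mp (mem_bot.mp (hγ₄ ▸ ha u hu))

theorem lowerCentralSeries_one_le_twoStepCentralizer [IsMulCommutative (γ₂ : Subgroup G)] :
    γ₂ ≤ twoStepCentralizer G := fun g hg u hu => by
  rw [commutatorElement_eq_one_iff_commute.mpr (setLike_mul_comm hg hu)]
  exact one_mem _

theorem eq_zero_of_commutator_twoStepCentralizer_eq (hγ₄ : (γ₄ : Subgroup G) = ⊥)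
    (hγ₃ : (γ₃ : Subgroup G) ≠ ⊥) {k : ℕ}
    (hk : ⁅twoStepCentralizer G, (γ₂ : Subgroup G)⁆ =
      (⊤ : Subgroup G).lowerCentralSeries (4 - k - 1)) :
    k = 0 := by
  have hbot : ⁅twoStepCentralizer G, (γ₂ : Subgroup G)⁆ = ⊥ := by
    rw [eq_bot_iff, ← hγ₄, commutator_le]
    exact fun a ha u hu => ha u hu
  by_contra hk0
  exact hγ₃ (eq_bot_iff.mpr (hbot ▸ hk ▸ Subgroup.lowerCentralSeries_antitone ⊤ (by omega)))

end

section TrivialTransfer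

variable {G : Type*} [Group G] [Finite G] [IsMulCommutative (γ₂ : Subgroup G)]

theorem pow_relIndex_eq_one_of_transferToDerivedTrivial {H : Subgroup G}
    (hH : TransferToDerivedTrivial H) {g : G} (hgH : g ∈ H)
    (hg : ∀ m : ℕ, g ^ m ∈ γ₂ → ∀ h ∈ H, Commute (g ^ m) h) : g ^ relIndex γ₂ H = 1 := by
  have hcoe := coe_transfer_id_eq_pow_of_pow_mem_center (K := subgroupOf γ₂ H) (g := ⟨g, hgH⟩)
    fun m hm => mem_center_iff.mpr fun h => Subtype.ext (hg m hm h h.2).symm.eq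
  rw [hH] at hcoe
  exact congrArg Subtype.val hcoe.symm

theorem pow_eq_one_of_mem_twoStepCentralizer {p : ℕ} (hγ₄ : (γ₄ : Subgroup G) = ⊥)
    (hχ₂ : TransferToDerivedTrivial (twoStepCentralizer G))
    (hrel : relIndex γ₂ (twoStepCentralizer G) = p)
    {g : G} (hg : g ∈ twoStepCentralizer G) : g ^ p = 1 :=
  hrel ▸ pow_relIndex_eq_one_of_transferToDerivedTrivial hχ₂ hg
    fun _ hm _ hh => (commute_of_mem_twoStepCentralizer hγ₄ hh hm).symm

theorem pow_eq_one_of_transferToDerivedTrivial_closure_singleton_sup {p : ℕ} (hp : p.Prime)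
    (hindex : (γ₂ : Subgroup G).index = p ^ 2) {x : G} (hx : x ∉ γ₂) (hxp : x ^ p ∈ γ₂)
    (hH : TransferToDerivedTrivial (closure {x} ⊔ γ₂)) : x ^ p = 1 := by
  have hxH : x ∈ closure {x} ⊔ γ₂ := mem_sup_left (subset_closure rfl)
  have hrel : relIndex γ₂ (closure {x} ⊔ γ₂) = p :=
    relIndex_eq_of_index_eq_sq hp hindex le_sup_right
      (closure_singleton_sup_ne_top hp hindex hxp) fun h => hx (h hxH)
  have hcent : closure {x} ⊔ γ₂ ≤ centralizer {x ^ p} := by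
    refine sup_le ?_ fun u hu => mem_centralizer_singleton_iff.mpr (setLike_mul_comm hu hxp)
    rw [closure_le, Set.singleton_subset_iff, SetLike.mem_coe, mem_centralizer_singleton_iff]
    exact (Commute.self_pow x p).eq
  rw [← hrel]
  refine pow_relIndex_eq_one_of_transferToDerivedTrivial hH hxH fun m hm h hh => ?_
  obtain ⟨j, rfl⟩ := prime_dvd_of_pow_mem hp hx hxp hm
  rw [pow_mul]
  exact Commute.pow_left (mem_centralizer_singleton_iff.mp (hcent hh)).symm j

end TrivialTransfer

theorem case_n_eq_four_of_trivial_transfers_general {G : Type*} [Group G] [Finite G]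
    [IsMulCommutative ((⊤ : Subgroup G).lowerCentralSeries 1)]
    (hmax : (⊤ : Subgroup G).lowerCentralSeries (4 - 1) = ⊥)
    (hmax' : (⊤ : Subgroup G).lowerCentralSeries (4 - 2) ≠ ⊥)
    (habel : Nonempty (Abelianization G ≃* Multiplicative (ZMod 5 × ZMod 5)))
    (k : ℕ)
    (hdef : ⁅(twoStepCentralizer G : Subgroup G), ((⊤ : Subgroup G).lowerCentralSeries 1 : Subgroup G)⁆ =
      (⊤ : Subgroup G).lowerCentralSeries (4 - k - 1))
    (x y : G) (hx : x ∉ twoStepCentralizer G)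
    (hy : y ∈ twoStepCentralizer G) (hy' : y ∉ (⊤ : Subgroup G).lowerCentralSeries 1)
    (s : ℕ → G) (hs2 : s 2 = ⁅y, x⁆) (hs : ∀ j, 2 ≤ j → s (j + 1) = ⁅s j, x⁆)
    (h1 : TransferToDerivedTrivial (twoStepCentralizer G))
    (h2 : TransferToDerivedTrivial (Subgroup.closure {x} ⊔ (⊤ : Subgroup G).lowerCentralSeries 1)) :
    x ^ 5 = 1 ∧ y ^ 5 * s 2 ^ 10 * s 3 ^ 10 * s 4 ^ 5 * s 5 = 1 ∧ ⁅y, s 2⁆ = 1 ∧ k = 0 := by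
  obtain ⟨e⟩ := habel
  have hindex := index_lowerCentralSeries_one_of_mulEquiv e
  have hγ₂ : γ₂ ≤ twoStepCentralizer G := lowerCentralSeries_one_le_twoStepCentralizer
  have hχ₂ : relIndex γ₂ (twoStepCentralizer G) = 5 :=
    relIndex_eq_of_index_eq_sq Nat.prime_five hindex hγ₂ (fun h => hx (h ▸ mem_top x))
      fun h => hy' (h hy)
  have hpow (g : G) (hg : g ∈ twoStepCentralizer G) : g ^ 5 = 1 :=
    pow_eq_one_of_mem_twoStepCentralizer hmax h1 hχ₂ hg
  have hs2γ₂ : s 2 ∈ γ₂ := hs2 ▸ commutatorElement_mem_lowerCentralSeries_succ (mem_top y) x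
  have hs3γ₃ : s 3 ∈ γ₃ := hs 2 le_rfl ▸ commutatorElement_mem_lowerCentralSeries_succ hs2γ₂ x
  have hs3γ₂ : s 3 ∈ γ₂ := Subgroup.lowerCentralSeries_antitone ⊤ (by norm_num) hs3γ₃
  have hs4 : s 4 = 1 :=
    mem_bot.mp (hmax ▸ hs 3 (by norm_num) ▸ commutatorElement_mem_lowerCentralSeries_succ hs3γ₃ x)
  have hs5 : s 5 = 1 := by rw [hs 4 (by norm_num), hs4, commutatorElement_one_left]
  refine ⟨?_, ?_, mem_bot.mp (hmax ▸ hy (s 2) hs2γ₂),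
    eq_zero_of_commutator_twoStepCentralizer_eq hmax hmax' hdef⟩
  · exact pow_eq_one_of_transferToDerivedTrivial_closure_singleton_sup Nat.prime_five hindex
      (fun h => hx (hγ₂ h)) (pow_mem_lowerCentralSeries_one_of_mulEquiv e x) h2
  · calc y ^ 5 * s 2 ^ 10 * s 3 ^ 10 * s 4 ^ 5 * s 5
        = y ^ 5 * (s 2 ^ 5) ^ 2 * (s 3 ^ 5) ^ 2 * s 4 ^ 5 * s 5 := by simp only [← pow_mul]
      _ = 1 := by
        rw [hpow y hy, hpow _ (hγ₂ hs2γ₂), hpow _ (hγ₂ hs3γ₂), hs4, hs5]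
        simp only [one_pow, mul_one]

/-- Proposition 3.1, case `n = 4`: trivial transfers from `χ₂(G)` and `H₂` force
`w = z = 0`, `a = 0` and defect `k = 0`, so `G ≅ G_0^(4)(0,0)`. -/
theorem case_n_eq_four_of_trivial_transfers {G : Type*} [Group G] [Finite G]
    [IsMulCommutative ((⊤ : Subgroup G).lowerCentralSeries 1)]
    (hord : Nat.card G = 5 ^ 4)
    (hmax : (⊤ : Subgroup G).lowerCentralSeries (4 - 1) = ⊥)
    (hmax' : (⊤ : Subgroup G).lowerCentralSeries (4 - 2) ≠ ⊥)
    (habel : Nonempty (Abelianization G ≃* Multiplicative (ZMod 5 × ZMod 5)))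
    (k : ℕ)
    (hdef : ⁅(twoStepCentralizer G : Subgroup G), ((⊤ : Subgroup G).lowerCentralSeries 1 : Subgroup G)⁆ =
      (⊤ : Subgroup G).lowerCentralSeries (4 - k - 1))
    (x y : G) (hx : x ∉ twoStepCentralizer G)
    (hy : y ∈ twoStepCentralizer G) (hy' : y ∉ (⊤ : Subgroup G).lowerCentralSeries 1)
    (s : ℕ → G) (hs2 : s 2 = ⁅y, x⁆) (hs : ∀ j, 2 ≤ j → s (j + 1) = ⁅s j, x⁆)
    (h1 : TransferToDerivedTrivial (twoStepCentralizer G))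
    (h2 : TransferToDerivedTrivial (Subgroup.closure {x} ⊔ (⊤ : Subgroup G).lowerCentralSeries 1)) :
    x ^ 5 = 1 ∧ y ^ 5 * s 2 ^ 10 * s 3 ^ 10 * s 4 ^ 5 * s 5 = 1 ∧ ⁅y, s 2⁆ = 1 ∧ k = 0 :=
  case_n_eq_four_of_trivial_transfers_general hmax hmax' habel k hdef x y hx hy hy' s hs2 hs h1 h2
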